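/- arXiv:2310.16657 — 5 statements merged into one kernel-verified Lean document; each statement's English description precedes it below -/
import Mathlib

section
/- For a simple symmetric random walk on the integers started at 0, and any n ≥ 1, the probability that S_j > 0 for all 1 ≤ j ≤ 2n equals one half of the probability that S_{2n} = 0. -/
/-!
The signs of `X 0, …, X (2n-1)` are independent fair coins, so each event has probability
(number of `±1`-paths of length `2n` in it) / `2 ^ (2n)`. A path that stays positive starts with an
up-step followed by a path of length `2n - 1` that stays nonnegative. Paths of length `m` staying
above `-a` are equinumerous with paths whose endpoint lies in `[-a, a + 1]`; for `a = 0` and `m`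
odd the endpoint must be `1`.
Splitting by the first step and flipping all steps, the paths of length `2n` ending at `0` are
twice the paths of length `2n - 1` ending at `1`.
-/

open Finset

namespace SimpleRandomWalk

def step (b : Bool) : ℤ := if b then 1 else -1

/-- The position after `j` steps of the path `ε` (`true` = up); steps beyond `m` count as `0`. -/
def height {m : ℕ} (ε : Fin m → Bool) (j : ℕ) : ℤ :=
  ∑ i ∈ range j, if h : i < m then step (ε ⟨i, h⟩) else 0

@[simp]
lemma height_zero {m : ℕ} (ε : Fin m → Bool) : height ε 0 = 0 := by
  simp [height]

@[simp]
lemma height_cons_succ {m : ℕ} (b : Bool) (δ : Fin m → Bool) (j : ℕ) :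
    height (Fin.cons b δ : Fin (m + 1) → Bool) (j + 1) = step b + height δ j := by
  rw [height, sum_range_succ', add_comm]
  congr 1
  refine sum_congr rfl fun i _ => ?_
  by_cases hi : i < m
  · rw [dif_pos (by omega), dif_pos hi]
    exact congrArg step (Fin.cons_succ (α := fun _ => Bool) b δ ⟨i, hi⟩)
  · rw [dif_neg (by omega), dif_neg hi]

lemma height_not {m : ℕ} (ε : Fin m → Bool) (j : ℕ) :
    height (fun i => !ε i) j = -height ε j := by
  rw [height, height, ← sum_neg_distrib]
  refine sum_congr rfl fun i _ => ?_
  split_ifs with hi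
  · cases ε ⟨i, hi⟩ <;> simp [step]
  · simp

lemma card_filter_cons {m : ℕ} (Q : (Fin (m + 1) → Bool) → Prop) [DecidablePred Q] :
    #{ε | Q ε} = #{δ : Fin m → Bool | Q (Fin.cons true δ)} +
      #{δ : Fin m → Bool | Q (Fin.cons false δ)} := by
  simp only [card_filter]
  rw [← Fintype.sum_equiv (Fin.consEquiv fun _ => Bool)
    (fun p : Bool × (Fin m → Bool) => if Q (Fin.cons p.1 p.2) then 1 else 0) _ fun _ => rfl,
    Fintype.sum_prod_type, Fintype.sum_bool]

lemma forall_height_cons_iff {m : ℕ} (a : ℤ) (b : Bool) (δ : Fin m → Bool) :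
    (∀ j ≤ m + 1, 0 ≤ a + height (Fin.cons b δ : Fin (m + 1) → Bool) j) ↔
      0 ≤ a ∧ ∀ j ≤ m, 0 ≤ a + step b + height δ j := by
  constructor
  · intro H
    refine ⟨by simpa using H 0 (by omega), fun j hj => ?_⟩
    have := H (j + 1) (by omega)
    rw [height_cons_succ] at this
    linarith
  · rintro ⟨ha, H⟩ (_ | j) hj
    · simpa using ha
    · rw [height_cons_succ]
      linarith [H j (by omega)]

/-- Both sides vanish for `a < 0` and satisfy `c (m + 1) a = c m (a + 1) + c m (a - 1)` for
`0 ≤ a`. -/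
theorem card_forall_height_nonneg (m : ℕ) (a : ℤ) :
    #{ε : Fin m → Bool | ∀ j ≤ m, 0 ≤ a + height ε j} =
      #{ε : Fin m → Bool | 0 ≤ a + height ε m ∧ a + height ε m ≤ 2 * a + 1} := by
  induction m generalizing a with
  | zero =>
    refine congrArg card (filter_congr fun ε _ => ?_)
    simp only [Nat.le_zero, forall_eq, height_zero]
    omega
  | succ m ih =>
    by_cases ha : 0 ≤ a
    · rw [card_filter_cons, card_filter_cons]
      simp only [forall_height_cons_iff, ha, true_and, height_cons_succ, step, if_true,
        Bool.false_eq_true, if_false]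
      rw [ih, ih]
      simp only [card_filter, ← sum_add_distrib]
      refine sum_congr rfl fun δ _ => ?_
      split_ifs <;> omega
    · rw [filter_false_of_mem, filter_false_of_mem]
      · intro ε _ h
        omega
      · intro ε _ h
        exact ha (by simpa using h 0 (by omega))

lemma even_height_add (m : ℕ) (ε : Fin m → Bool) : Even (height ε m + m) := by
  induction m with
  | zero => simp
  | succ m ih =>
    obtain ⟨b, δ, rfl⟩ : ∃ b δ, ε = Fin.cons b δ := ⟨ε 0, Fin.tail ε, (Fin.cons_self_tail ε).symm⟩
    obtain ⟨r, hr⟩ := ih δ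
    rw [height_cons_succ]
    cases b
    · exact ⟨r, by simp only [step]; push_cast; omega⟩
    · exact ⟨r + 1, by simp only [step]; push_cast; omega⟩

lemma card_positive_paths (m : ℕ) :
    #{ε : Fin (m + 1) → Bool | ∀ j ≤ m + 1, 1 ≤ j → 0 < height ε j} =
      #{δ : Fin m → Bool | ∀ j ≤ m, 0 ≤ height δ j} := by
  have hdown : #{δ : Fin m → Bool | ∀ j ≤ m + 1, 1 ≤ j → 0 < height (Fin.cons false δ) j} = 0 :=
    card_eq_zero.2 <| filter_false_of_mem fun δ _ H => by simpa [step] using H 1 (by omega) le_rfl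
  rw [card_filter_cons, hdown, add_zero]
  refine congrArg card (filter_congr fun δ _ => ⟨fun H j hj => ?_, ?_⟩)
  · have := H (j + 1) (by omega) (by omega)
    rw [height_cons_succ] at this
    simp only [step, if_true] at this
    omega
  · rintro H (_ | j) hj h1
    · omega
    · rw [height_cons_succ]
      simp only [step, if_true]
      linarith [H j (by omega)]

lemma card_height_eq_zero (m : ℕ) :
    #{ε : Fin (m + 1) → Bool | height ε (m + 1) = 0} =
      2 * #{δ : Fin m → Bool | height δ m = 1} := by
  rw [card_filter_cons, two_mul]
  simp only [height_cons_succ, step, if_true, Bool.false_eq_true, if_false]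
  congr 1
  · refine card_nbij' (fun δ i => !δ i) (fun δ i => !δ i) ?_ ?_ ?_ ?_ <;> intro δ hδ <;>
      simp_all [height_not]
    omega
  · refine congrArg card (filter_congr fun δ _ => ?_)
    omega

theorem two_mul_card_positive_paths (m : ℕ) (hm : Odd m) :
    2 * #{ε : Fin (m + 1) → Bool | ∀ j ≤ m + 1, 1 ≤ j → 0 < height ε j} =
      #{ε : Fin (m + 1) → Bool | height ε (m + 1) = 0} := by
  have hreflect := card_forall_height_nonneg m 0
  simp only [zero_add, mul_zero] at hreflect
  rw [card_positive_paths, card_height_eq_zero, hreflect]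
  refine congrArg (2 * card ·) (filter_congr fun δ _ => ?_)
  obtain ⟨r, hr⟩ := even_height_add m δ
  obtain ⟨k, hk⟩ := hm
  omega

lemma sum_range_eq_height {x : ℕ → ℤ} (hx : ∀ i, x i = step (decide (x i = 1))) {m j : ℕ}
    (hj : j ≤ m) : ∑ i ∈ range j, x i = height (fun i : Fin m => decide (x i = 1)) j :=
  sum_congr rfl fun i hi => by rw [dif_pos ((mem_range.1 hi).trans_le hj)]; exact hx i

end SimpleRandomWalk

open MeasureTheory ProbabilityTheory Filter SimpleRandomWalk

section FairCoins

variable {Ω : Type*} [MeasurableSpace Ω] {P : Measure Ω}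

theorem measure_eq_card_mul_of_fair_coins {ι : Type*} [Fintype ι] [DecidableEq ι]
    {Z : ι → Ω → Bool} (hZ : ∀ i, Measurable (Z i)) (hind : iIndepFun Z P)
    (hfair : ∀ i b, P {ω | Z i ω = b} = 1 / 2) (Q : (ι → Bool) → Prop) [DecidablePred Q] :
    P {ω | Q fun i => Z i ω} = #{ε | Q ε} * (1 / 2) ^ Fintype.card ι := by
  have hZv : Measurable fun ω i => Z i ω := measurable_pi_lambda _ hZ
  have hfiber (ε : ι → Bool) : P ((fun ω i => Z i ω) ⁻¹' {ε}) = (1 / 2) ^ Fintype.card ι := by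
    have : (fun ω i => Z i ω) ⁻¹' {ε} = ⋂ i ∈ (univ : Finset ι), Z i ⁻¹' {ε i} := by
      ext ω
      simp [funext_iff]
    rw [this, hind.measure_inter_preimage_eq_mul _ fun i _ => measurableSet_singleton (ε i)]
    simp [Set.preimage, hfair]
  calc P {ω | Q fun i => Z i ω}
      = P ((fun ω i => Z i ω) ⁻¹' ↑({ε | Q ε} : Finset (ι → Bool))) := by
        congr 1
        ext ω
        simp
    _ = ∑ ε ∈ {ε | Q ε}, P ((fun ω i => Z i ω) ⁻¹' {ε}) :=
        (sum_measure_preimage_singleton _ fun ε _ => hZv (measurableSet_singleton ε)).symm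
    _ = #{ε | Q ε} * (1 / 2) ^ Fintype.card ι := by
        rw [sum_congr rfl fun ε _ => hfiber ε, sum_const, nsmul_eq_mul]

variable [IsProbabilityMeasure P] {Y : Ω → ℤ}

lemma measure_decide_eq_one (hY : Measurable Y) (h1 : P {ω | Y ω = 1} = 1 / 2) (b : Bool) :
    P {ω | decide (Y ω = 1) = b} = 1 / 2 := by
  cases b
  · have hcompl : {ω | decide (Y ω = 1) = false} = {ω | Y ω = 1}ᶜ := by
      ext
      simp
    rw [hcompl, prob_compl_eq_one_sub (s := {ω | Y ω = 1}) (hY (measurableSet_singleton 1)), h1,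
      one_div, ENNReal.one_sub_inv_two]
  · simpa using h1

lemma ae_eq_step_decide (hY : Measurable Y) (h1 : P {ω | Y ω = 1} = 1 / 2)
    (h2 : P {ω | Y ω = -1} = 1 / 2) : ∀ᵐ ω ∂P, Y ω = step (decide (Y ω = 1)) := by
  have hsplit : {ω | Y ω = step (decide (Y ω = 1))} = {ω | Y ω = 1} ∪ {ω | Y ω = -1} := by
    ext ω
    by_cases h : Y ω = 1 <;> simp [step, h]
  have hdisj : Disjoint {ω | Y ω = 1} {ω | Y ω = -1} :=
    Set.disjoint_left.2 fun ω h h' => by simp_all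
  have hmeas : MeasurableSet ({ω | Y ω = 1} ∪ {ω | Y ω = -1}) :=
    (hY (measurableSet_singleton _)).union (hY (measurableSet_singleton _))
  rw [ae_iff_measure_eq (hsplit ▸ hmeas.nullMeasurableSet), hsplit,
    measure_union hdisj (hY (measurableSet_singleton _)), h1, h2, ENNReal.add_halves, measure_univ]

end FairCoins

theorem stmt1 {Ω : Type*} [MeasurableSpace Ω] (P : Measure Ω) [IsProbabilityMeasure P]
    (X : ℕ → Ω → ℤ) (hX : ∀ i, Measurable (X i))
    (hindep : iIndepFun X P)
    (h1 : ∀ i, P {ω | X i ω = 1} = 1/2)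
    (h2 : ∀ i, P {ω | X i ω = -1} = 1/2)
    (S : ℕ → Ω → ℤ) (hS : ∀ n ω, S n ω = ∑ i ∈ Finset.range n, X i ω)
    (n : ℕ) (hn : 1 ≤ n) :
    P {ω | ∀ j, 1 ≤ j → j ≤ 2 * n → 0 < S j ω} = (1 / 2) * P {ω | S (2 * n) ω = 0} := by
  obtain ⟨m, hm⟩ : ∃ m, 2 * n = m + 1 := ⟨2 * n - 1, by omega⟩
  let Z : Fin (m + 1) → Ω → Bool := fun i ω => decide (X i ω = 1)
  have hZ : ∀ i, Measurable (Z i) := fun i =>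
    (Measurable.of_discrete (f := fun x : ℤ => decide (x = 1))).comp (hX i)
  have hZind : iIndepFun Z P :=
    (hindep.precomp Fin.val_injective).comp (fun _ x => decide (x = 1)) fun _ =>
      Measurable.of_discrete
  have hcount :=
    measure_eq_card_mul_of_fair_coins hZ hZind fun i => measure_decide_eq_one (hX i) (h1 i)
  simp only [Fintype.card_fin] at hcount
  have hwalk : ∀ᵐ ω ∂P, ∀ j ≤ m + 1, S j ω = height (fun i => Z i ω) j := by
    filter_upwards [ae_all_iff.2 fun i => ae_eq_step_decide (hX i) (h1 i) (h2 i)] with ω hω j hj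
    rw [hS]
    exact sum_range_eq_height hω hj
  have hpos : P {ω | ∀ j, 1 ≤ j → j ≤ 2 * n → 0 < S j ω} =
      #{ε : Fin (m + 1) → Bool | ∀ j ≤ m + 1, 1 ≤ j → 0 < height ε j} * (1 / 2) ^ (m + 1) := by
    refine (measure_congr (eventuallyEq_set.2 ?_)).trans
      (hcount fun ε => ∀ j ≤ m + 1, 1 ≤ j → 0 < height ε j)
    filter_upwards [hwalk] with ω hω
    exact ⟨fun H j hj h1j => hω j hj ▸ H j h1j (by omega),
      fun H j h1j hj => (hω j (by omega)).symm ▸ H j (by omega) h1j⟩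
  have hzero : P {ω | S (2 * n) ω = 0} =
      #{ε : Fin (m + 1) → Bool | height ε (m + 1) = 0} * (1 / 2) ^ (m + 1) := by
    refine (measure_congr (eventuallyEq_set.2 ?_)).trans (hcount fun ε => height ε (m + 1) = 0)
    filter_upwards [hwalk] with ω hω
    rw [hm, hω (m + 1) le_rfl]
  rw [hpos, hzero, ← two_mul_card_positive_paths m ⟨n - 1, by omega⟩]
  push_cast
  rw [← mul_assoc, ← mul_assoc, ENNReal.div_mul_cancel two_ne_zero ENNReal.ofNat_ne_top, one_mul]
end

section
/- For a simple symmetric random walk on the integers started at 0, and any n ≥ 1, the probability that S_j ≥ 0 for all 1 ≤ j ≤ 2n equals the probability that S_{2n} = 0. -/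
/-!
Both events depend only on the first `2n` steps, whose `2^(2n)` sign patterns are equally
likely, so it suffices to count patterns. Let `N(m, u)` be the number of nonnegative paths of
length `m` with at least `u` up-steps. Splitting off the last step gives Pascal's recursion
`N(m+1, u+1) = N(m, u) + N(m, u+1)` as long as `m ≤ 2u + 1` (a final down-step then cannot make
the path negative), and parity gives `N(2u+1, u) = N(2u+1, u+1)`; hence `N(m, u) = C(m, u)` for
`m ≤ 2u + 1`. A nonnegative path of length `2n` has at least `n` up-steps, so there are
`C(2n, n)` of them, as many as there are paths returning to `0`.
-/

open MeasureTheory ProbabilityTheory Filter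
open scoped ENNReal
open Finset

namespace SimpleRandomWalk

abbrev signs (m : ℕ) : Finset (Fin m → ℤ) := Fintype.piFinset fun _ ↦ {1, -1}

section Paths

variable {m : ℕ}

def partialSum (v : Fin m → ℤ) (j : ℕ) : ℤ := ∑ i : Fin m with i.val < j, v i

def IsNonnegPath (v : Fin m → ℤ) : Prop := ∀ j ≤ m, 0 ≤ partialSum v j

instance (v : Fin m → ℤ) : Decidable (IsNonnegPath v) := by unfold IsNonnegPath; infer_instance

lemma partialSum_of_le (v : Fin m → ℤ) {j : ℕ} (hj : m ≤ j) : partialSum v j = ∑ i, v i := by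
  rw [partialSum, filter_true_of_mem fun i _ ↦ by omega]

lemma partialSum_eq_sum_range (f : ℕ → ℤ) {j : ℕ} (hj : j ≤ m) :
    partialSum (fun i : Fin m ↦ f i) j = ∑ i ∈ range j, f i := by
  rw [partialSum, sum_filter, Fin.sum_univ_eq_sum_range (fun i ↦ if i < j then f i else 0),
    ← sum_filter]
  exact sum_congr (by ext; simp; omega) fun _ _ ↦ rfl

lemma partialSum_snoc (v : Fin m → ℤ) (b : ℤ) (j : ℕ) :
    partialSum (Fin.snoc v b : Fin (m + 1) → ℤ) j = partialSum v j + if m < j then b else 0 := by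
  simp [partialSum, sum_filter, Fin.sum_univ_castSucc]

lemma isNonnegPath_snoc (v : Fin m → ℤ) (b : ℤ) :
    IsNonnegPath (Fin.snoc v b : Fin (m + 1) → ℤ) ↔ IsNonnegPath v ∧ 0 ≤ ∑ i, v i + b := by
  constructor
  · intro h
    refine ⟨fun j hj ↦ ?_, ?_⟩
    · simpa [partialSum_snoc, show ¬ m < j by omega] using h j (by omega)
    · simpa [partialSum_snoc, partialSum_of_le] using h (m + 1) le_rfl
  · rintro ⟨hv, hb⟩ j hj
    rw [partialSum_snoc]
    rcases Nat.lt_or_ge m j with hmj | hjm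
    · rwa [if_pos hmj, partialSum_of_le v hmj.le]
    · simpa [show ¬ m < j by omega] using hv j hjm

lemma IsNonnegPath.sum_nonneg {v : Fin m → ℤ} (hv : IsNonnegPath v) : 0 ≤ ∑ i, v i := by
  simpa [partialSum_of_le] using hv m le_rfl

lemma natCast_add_sum_eq_two_mul_card {v : Fin m → ℤ} (hv : v ∈ signs m) :
    (m : ℤ) + ∑ i, v i = 2 * #{i | v i = 1} := by
  have h : ∀ i, 1 + v i = if v i = 1 then 2 else 0 := fun i ↦ by
    have := Fintype.mem_piFinset.1 hv i
    simp only [mem_insert, mem_singleton] at this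
    rcases this with hvi | hvi <;> simp [hvi]
  calc (m : ℤ) + ∑ i, v i = ∑ i, (1 + v i) := by simp [sum_add_distrib]
    _ = ∑ i, if v i = 1 then 2 else 0 := sum_congr rfl fun i _ ↦ h i
    _ = 2 * #{i | v i = 1} := by rw [← sum_filter, sum_const, nsmul_eq_mul, mul_comm]

lemma card_filter_signs_succ (Q : (Fin (m + 1) → ℤ) → Prop) [DecidablePred Q] :
    #{w ∈ signs (m + 1) | Q w} =
      #{v ∈ signs m | Q (Fin.snoc v 1)} + #{v ∈ signs m | Q (Fin.snoc v (-1))} := by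
  have h := filter_piFinset_eq_map_snocEquiv (fun _ : Fin (m + 1) ↦ ({1, -1} : Finset ℤ))
    fun _ ↦ True
  simp only [filter_true] at h
  rw [signs, h, filter_map, card_map, card_filter, sum_product, sum_pair (by decide),
    card_filter, card_filter]
  rfl

end Paths

lemma card_signs_natCast_add_sum_eq_two_mul (m u : ℕ) :
    #{v ∈ signs m | (m : ℤ) + ∑ i, v i = 2 * u} = m.choose u := by
  induction m generalizing u with
  | zero => cases u <;> simp; omega
  | succ m ih =>
    rw [card_filter_signs_succ]
    simp only [Fin.sum_snoc, Nat.cast_succ]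
    cases u with
    | zero =>
      rw [filter_false_of_mem fun v hv ↦ ?_, card_empty, zero_add, Nat.choose_zero_right,
        ← Nat.choose_zero_right m, ← ih 0]
      · exact congrArg card (filter_congr fun v _ ↦ by omega)
      · have := natCast_add_sum_eq_two_mul_card hv
        omega
    | succ u =>
      rw [Nat.choose_succ_succ, ← ih u, ← ih (u + 1)]
      congr 2 <;> exact filter_congr fun v _ ↦ by push_cast; omega

/-- `2u ≤ m + ∑ v` says that `v` has at least `u` up-steps. -/
def nonnegCount (m u : ℕ) : ℕ := #{v ∈ signs m | IsNonnegPath v ∧ 2 * (u : ℤ) ≤ m + ∑ i, v i}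

lemma nonnegCount_succ_succ {m u : ℕ} (h : m ≤ 2 * u + 1) :
    nonnegCount (m + 1) (u + 1) = nonnegCount m u + nonnegCount m (u + 1) := by
  rw [nonnegCount, card_filter_signs_succ]
  simp only [isNonnegPath_snoc, Fin.sum_snoc, Nat.cast_succ]
  congr 2 <;> refine filter_congr fun v _ ↦ ?_
  · exact ⟨fun h ↦ ⟨h.1.1, by omega⟩, fun h ↦ ⟨⟨h.1, by linarith [h.1.sum_nonneg]⟩, by omega⟩⟩
  · exact ⟨fun h ↦ ⟨h.1.1, by omega⟩, fun h ↦ ⟨⟨h.1, by omega⟩, by omega⟩⟩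

lemma nonnegCount_two_mul_add_one (u : ℕ) :
    nonnegCount (2 * u + 1) u = nonnegCount (2 * u + 1) (u + 1) := by
  refine congrArg card (filter_congr fun v hv ↦ and_congr_right fun hnn ↦ ?_)
  have := natCast_add_sum_eq_two_mul_card hv
  have := hnn.sum_nonneg
  push_cast
  omega

lemma nonnegCount_eq_choose {m u : ℕ} (h : m ≤ 2 * u + 1) : nonnegCount m u = m.choose u := by
  induction m generalizing u with
  | zero => cases u <;> simp [nonnegCount, IsNonnegPath, partialSum]
  | succ m ih =>
    rcases Nat.lt_or_ge m (2 * u) with hm | hm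
    · obtain ⟨w, rfl⟩ : ∃ w, u = w + 1 := ⟨u - 1, by omega⟩
      rw [nonnegCount_succ_succ (by omega), ih (by omega), ih (by omega), Nat.choose_succ_succ]
    · obtain rfl : m = 2 * u := by omega
      rw [nonnegCount_two_mul_add_one, nonnegCount_succ_succ (m := 2 * u) (by omega),
        ih (by omega), ih (by omega), ← Nat.choose_succ_succ, Nat.choose_symm_half]

theorem card_isNonnegPath_eq_card_sum_eq_zero (n : ℕ) :
    #{v ∈ signs (2 * n) | IsNonnegPath v} = #{v ∈ signs (2 * n) | ∑ i, v i = 0} := by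
  have hnonneg : #{v ∈ signs (2 * n) | IsNonnegPath v} = nonnegCount (2 * n) n :=
    congrArg card (filter_congr fun v _ ↦ ⟨fun h ↦ ⟨h, by have := h.sum_nonneg; push_cast; omega⟩,
      And.left⟩)
  have hzero : #{v ∈ signs (2 * n) | ∑ i, v i = 0} =
      #{v ∈ signs (2 * n) | ((2 * n : ℕ) : ℤ) + ∑ i, v i = 2 * n} :=
    congrArg card (filter_congr fun v _ ↦ by push_cast; omega)
  rw [hnonneg, hzero, nonnegCount_eq_choose (by omega), card_signs_natCast_add_sum_eq_two_mul]


section Probability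

variable {Ω : Type*} [MeasurableSpace Ω] {P : Measure Ω} {X : ℕ → Ω → ℤ}

lemma ae_mem_signs [IsProbabilityMeasure P] (hX : ∀ i, Measurable (X i))
    (h1 : ∀ i, P {ω | X i ω = 1} = 1 / 2) (h2 : ∀ i, P {ω | X i ω = -1} = 1 / 2) (m : ℕ) :
    ∀ᵐ ω ∂P, (fun i : Fin m ↦ X i ω) ∈ signs m := by
  have hi : ∀ i, ∀ᵐ ω ∂P, X i ω ∈ ({1, -1} : Set ℤ) := fun i ↦ by
    have hdisj : Disjoint {ω | X i ω = 1} {ω | X i ω = -1} :=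
      Set.disjoint_left.2 fun ω h h' ↦ by simp_all
    rw [ae_iff_measure_eq (hX i .of_discrete).nullMeasurableSet, measure_univ]
    rw [show {ω | X i ω ∈ ({1, -1} : Set ℤ)} = {ω | X i ω = 1} ∪ {ω | X i ω = -1} by ext; simp]
    rw [measure_union hdisj (hX i (measurableSet_singleton _)), h1, h2, ENNReal.add_halves]
  filter_upwards [ae_all_iff.2 hi] with ω hω
  simpa using fun i : Fin m ↦ hω i

lemma measure_fun_eq_of_mem_signs (hindep : iIndepFun X P)
    (h1 : ∀ i, P {ω | X i ω = 1} = 1 / 2) (h2 : ∀ i, P {ω | X i ω = -1} = 1 / 2)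
    {m : ℕ} {v : Fin m → ℤ} (hv : v ∈ signs m) :
    P {ω | (fun i : Fin m ↦ X i ω) = v} = 2⁻¹ ^ m := by
  have hset : {ω | (fun i : Fin m ↦ X i ω) = v} = ⋂ i : Fin m, X i ⁻¹' {v i} := by
    ext; simp [funext_iff]
  rw [hset, (hindep.precomp Fin.val_injective).meas_iInter fun i ↦
    ⟨{v i}, measurableSet_singleton _, rfl⟩]
  trans ∏ _i : Fin m, (2⁻¹ : ℝ≥0∞)
  · refine prod_congr rfl fun i _ ↦ ?_
    have := Fintype.mem_piFinset.1 hv i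
    simp only [mem_insert, mem_singleton] at this
    rcases this with hvi | hvi <;> simp [hvi, Set.preimage, h1, h2]
  · simp

lemma measure_setOf_eq_card_mul [IsProbabilityMeasure P] (hX : ∀ i, Measurable (X i))
    (hindep : iIndepFun X P)
    (h1 : ∀ i, P {ω | X i ω = 1} = 1 / 2) (h2 : ∀ i, P {ω | X i ω = -1} = 1 / 2)
    {m : ℕ} (R : (Fin m → ℤ) → Prop) [DecidablePred R] :
    P {ω | R fun i : Fin m ↦ X i ω} = #{v ∈ signs m | R v} * 2⁻¹ ^ m := by
  have hY : Measurable fun ω (i : Fin m) ↦ X i ω := measurable_pi_lambda _ fun i ↦ hX i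
  have hae : {ω | R fun i : Fin m ↦ X i ω} =ᵐ[P]
      ⋃ v ∈ {v ∈ signs m | R v}, {ω | (fun i : Fin m ↦ X i ω) = v} := by
    refine Filter.Eventually.set_eq ?_
    filter_upwards [ae_mem_signs hX h1 h2 m] with ω hω
    simp only [Set.mem_ofPred_eq, Set.mem_iUnion, mem_filter, exists_prop, exists_eq_right', hω,
      true_and]
  rw [measure_congr hae, measure_biUnion_finset
    (fun v _ w _ hvw ↦ Set.disjoint_left.2 fun ω h h' ↦ hvw (h.symm.trans h'))
    fun v _ ↦ measurableSet_eq_fun hY measurable_const,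
    sum_congr rfl fun v hv ↦ measure_fun_eq_of_mem_signs hindep h1 h2 (mem_filter.1 hv).1,
    sum_const, nsmul_eq_mul]

end Probability

end SimpleRandomWalk

open SimpleRandomWalk in
theorem stmt2_general {Ω : Type*} [MeasurableSpace Ω] (P : Measure Ω) [IsProbabilityMeasure P]
    (X : ℕ → Ω → ℤ) (hX : ∀ i, Measurable (X i))
    (hindep : iIndepFun X P)
    (h1 : ∀ i, P {ω | X i ω = 1} = 1/2)
    (h2 : ∀ i, P {ω | X i ω = -1} = 1/2)
    (S : ℕ → Ω → ℤ) (hS : ∀ n ω, S n ω = ∑ i ∈ Finset.range n, X i ω)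
    (n : ℕ) :
    P {ω | ∀ j, 1 ≤ j → j ≤ 2 * n → 0 ≤ S j ω} = P {ω | S (2 * n) ω = 0} := by
  have hpath : {ω | ∀ j, 1 ≤ j → j ≤ 2 * n → 0 ≤ S j ω} =
      {ω | IsNonnegPath fun i : Fin (2 * n) ↦ X i ω} := by
    ext ω
    refine forall_congr' fun j ↦ ⟨fun h hj ↦ ?_, fun h _ hj ↦ ?_⟩
    · rcases j with _ | j
      · simp [partialSum]
      · rw [partialSum_eq_sum_range (X · ω) hj, ← hS]
        exact h (by omega) hj
    · rw [hS, ← partialSum_eq_sum_range (X · ω) hj]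
      exact h hj
  have hzero : {ω | S (2 * n) ω = 0} = {ω | ∑ i : Fin (2 * n), X i ω = 0} := by
    ext ω
    rw [Set.mem_ofPred_eq, hS, ← Fin.sum_univ_eq_sum_range]
    rfl
  rw [hpath, hzero, measure_setOf_eq_card_mul hX hindep h1 h2,
    measure_setOf_eq_card_mul hX hindep h1 h2 fun v ↦ ∑ i, v i = 0,
    card_isNonnegPath_eq_card_sum_eq_zero]

theorem stmt2 {Ω : Type*} [MeasurableSpace Ω] (P : Measure Ω) [IsProbabilityMeasure P]
    (X : ℕ → Ω → ℤ) (hX : ∀ i, Measurable (X i))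
    (hindep : iIndepFun X P)
    (h1 : ∀ i, P {ω | X i ω = 1} = 1/2)
    (h2 : ∀ i, P {ω | X i ω = -1} = 1/2)
    (S : ℕ → Ω → ℤ) (hS : ∀ n ω, S n ω = ∑ i ∈ Finset.range n, X i ω)
    (n : ℕ) (hn : 1 ≤ n) :
    P {ω | ∀ j, 1 ≤ j → j ≤ 2 * n → 0 ≤ S j ω} = P {ω | S (2 * n) ω = 0} :=
  stmt2_general P X hX hindep h1 h2 S hS n
end

section
/- For a simple symmetric random walk started at 0 and even n ≥ 2, the probability that S_j ≥ 0 for all 0 ≤ j ≤ n and S_n = 0 equals C(n, n/2)/2^n − C(n, (n+2)/2)/2^n, which equals 2·(n−1)!!/(n+2)!!. -/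
/-! Almost surely every increment is `±1`, and then a path of length `2m` that stays nonnegative and
returns to `0` is exactly a Dyck word of semilength `m`. By independence each of the `4^m` step
sequences has probability `4^(-m)`, so the probability is `catalan m / 4^m`; the two closed forms
are the identities `catalan m = C(2m, m) - C(2m, m+1)` and `catalan m * (m+1)! = 2^m (2m-1)‼`. -/

open MeasureTheory ProbabilityTheory

section Catalan

open Nat

theorem catalan_add_choose_succ (m : ℕ) :
    catalan m + (2 * m).choose (m + 1) = (2 * m).choose m := by
  have hcat := succ_mul_catalan_eq_centralBinom m
  have hsucc := choose_succ_right_eq (2 * m) m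
  rw [centralBinom_eq_two_mul_choose] at hcat
  rw [show 2 * m - m = m by omega] at hsucc
  apply Nat.eq_of_mul_eq_mul_left m.succ_pos
  calc (m + 1) * (catalan m + (2 * m).choose (m + 1))
      = (m + 1) * catalan m + (2 * m).choose (m + 1) * (m + 1) := by ring
    _ = (2 * m).choose m + (2 * m).choose m * m := by rw [hcat, hsucc]
    _ = (m + 1) * (2 * m).choose m := by ring

theorem factorial_two_mul_eq (m : ℕ) : (2 * m)! = 2 ^ m * m ! * (2 * m - 1)‼ := by
  cases m with
  | zero => rfl
  | succ m =>
    rw [show 2 * (m + 1) = 2 * m + 1 + 1 by ring, factorial_eq_mul_doubleFactorial,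
      show 2 * m + 1 + 1 = 2 * (m + 1) by ring, doubleFactorial_two_mul]
    rfl

theorem catalan_mul_factorial_succ (m : ℕ) : catalan m * (m + 1)! = 2 ^ m * (2 * m - 1)‼ := by
  have hchoose := choose_mul_factorial_mul_factorial (show m ≤ 2 * m by omega)
  rw [show 2 * m - m = m by omega, factorial_two_mul_eq] at hchoose
  have hcentral : (2 * m).choose m * m ! = 2 ^ m * (2 * m - 1)‼ :=
    Nat.eq_of_mul_eq_mul_right m.factorial_pos (by rw [hchoose]; ring)
  rw [← hcentral, ← centralBinom_eq_two_mul_choose, ← succ_mul_catalan_eq_centralBinom,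
    factorial_succ]
  ring

theorem cast_catalan_eq_choose_sub_choose (m : ℕ) :
    (catalan m : ℝ) = (2 * m).choose m - (2 * m).choose (m + 1) := by
  rw [← catalan_add_choose_succ m]
  push_cast
  ring

theorem catalan_mul_half_pow_eq_doubleFactorial (m : ℕ) :
    (catalan m : ℝ) * (1 / 2) ^ (2 * m) = 2 * ((2 * m - 1)‼ : ℝ) / ((2 * m + 2)‼ : ℝ) := by
  have h : (catalan m * (m + 1)! : ℝ) = 2 ^ m * (2 * m - 1)‼ := by
    exact_mod_cast catalan_mul_factorial_succ m
  rw [show 2 * m + 2 = 2 * (m + 1) by ring, doubleFactorial_two_mul, eq_div_iff (by positivity)]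
  push_cast
  have h4 : (2 : ℝ) ^ (2 * m) = 2 ^ m * 2 ^ m := by rw [two_mul, pow_add]
  rw [one_div_pow, h4, pow_succ]
  field_simp
  exact h

end Catalan

namespace SimpleRandomWalk

open DyckStep Finset

def stepList (x : ℕ → ℤ) (n : ℕ) : List DyckStep :=
  (List.range n).map fun i => if x i = 1 then U else D

section Combinatorics

variable {x : ℕ → ℤ} {n : ℕ}

@[simp] lemma length_stepList (x : ℕ → ℤ) (n : ℕ) : (stepList x n).length = n := by
  simp [stepList]

lemma take_stepList {j : ℕ} (h : j ≤ n) : (stepList x n).take j = stepList x j := by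
  rw [stepList, stepList, ← List.map_take, List.take_range, min_eq_left h]

lemma sum_range_eq_count_U_sub_count_D_stepList (hx : ∀ i < n, x i = 1 ∨ x i = -1) :
    ∑ i ∈ range n, x i = ((stepList x n).count U : ℤ) - (stepList x n).count D := by
  induction n with
  | zero => simp [stepList]
  | succ n ih =>
    rw [sum_range_succ, ih fun i hi => hx i (by omega)]
    rcases hx n (by omega) with h | h <;> simp [stepList, List.range_succ, h] <;> ring

lemma exists_dyckWord_toList_eq_stepList_iff (hx : ∀ i < n, x i = 1 ∨ x i = -1) :
    (∃ p : DyckWord, p.toList = stepList x n) ↔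
      (∀ j ≤ n, 0 ≤ ∑ i ∈ range j, x i) ∧ ∑ i ∈ range n, x i = 0 := by
  have hprefix : ∀ j ≤ n, ∑ i ∈ range j, x i
      = (((stepList x n).take j).count U : ℤ) - ((stepList x n).take j).count D := by
    intro j hj
    rw [take_stepList hj]
    exact sum_range_eq_count_U_sub_count_D_stepList fun i hi => hx i (by omega)
  have htotal := sum_range_eq_count_U_sub_count_D_stepList hx
  constructor
  · rintro ⟨p, hp⟩
    have hcount := p.count_U_eq_count_D
    rw [hp] at hcount
    refine ⟨fun j hj => ?_, by omega⟩
    have hle := p.count_D_le_count_U j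
    rw [hp] at hle
    rw [hprefix j hj]
    omega
  · rintro ⟨hnonneg, hzero⟩
    refine ⟨⟨stepList x n, by omega, fun j => ?_⟩, rfl⟩
    rcases le_total j n with hj | hj
    · have := hprefix j hj
      have := hnonneg j hj
      omega
    · rw [List.take_of_length_le (by simpa using hj)]
      omega

lemma stepList_eq_iff {l : List DyckStep} (hl : l.length = n) :
    stepList x n = l ↔ ∀ i < n, (x i = 1 ↔ l.getD i D = U) := by
  rw [List.ext_getElem_iff]
  simp only [length_stepList, hl, true_and]
  refine forall_congr' fun i => ⟨fun h hi => ?_, fun h hi _ => ?_⟩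
  · have := h hi (hl ▸ hi)
    simp only [stepList, List.getElem_map, List.getElem_range] at this
    rw [List.getD_eq_getElem _ _ (hl ▸ hi), ← this]
    split_ifs <;> simpa
  · have := h hi
    simp only [stepList, List.getElem_map, List.getElem_range]
    rw [List.getD_eq_getElem _ _ (hl ▸ hi)] at this
    rcases (l[i]'(hl ▸ hi)).dichotomy with hU | hD
    · simp_all
    · simp_all

def dyckLists (m : ℕ) : Finset (List DyckStep) :=
  univ.image fun p : {p : DyckWord // p.semilength = m} => p.1.toList

lemma card_dyckLists (m : ℕ) : (dyckLists m).card = catalan m := by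
  rw [dyckLists, card_image_of_injective _ fun p q h => Subtype.ext (DyckWord.ext h), card_univ,
    DyckWord.card_dyckWord_semilength_eq_catalan]

lemma mem_dyckLists {m : ℕ} {l : List DyckStep} :
    l ∈ dyckLists m ↔ l.length = 2 * m ∧ ∃ p : DyckWord, p.toList = l := by
  simp only [dyckLists, mem_image, mem_univ, true_and, Subtype.exists]
  refine ⟨fun ⟨p, hm, hp⟩ => ⟨?_, p, hp⟩, fun ⟨hl, p, hp⟩ => ⟨p, ?_, hp⟩⟩
  · rw [← hp, ← p.two_mul_semilength_eq_length, hm]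
  · have := p.two_mul_semilength_eq_length
    rw [hp, hl] at this
    omega

end Combinatorics

lemma setOf_stepList_eq {Ω : Type*} {X : ℕ → Ω → ℤ} {n : ℕ} {l : List DyckStep}
    (hl : l.length = n) :
    {ω | stepList (X · ω) n = l} = ⋂ i ∈ range n, X i ⁻¹' {z | z = 1 ↔ l.getD i D = U} := by
  ext ω
  simp [stepList_eq_iff hl]

section Probability

variable {Ω : Type*} [MeasurableSpace Ω] {P : Measure Ω} [IsProbabilityMeasure P]
  {X : ℕ → Ω → ℤ}

lemma measurableSet_stepList_eq (hX : ∀ i, Measurable (X i)) {n : ℕ} {l : List DyckStep}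
    (hl : l.length = n) : MeasurableSet {ω | stepList (X · ω) n = l} := by
  rw [setOf_stepList_eq hl]
  exact .biInter (Set.to_countable _) fun i _ => hX i (.of_discrete)

lemma measure_preimage_eq_one_iff_eq_half (hX : ∀ i, Measurable (X i))
    (h1 : ∀ i, P {ω | X i ω = 1} = 1 / 2) (i : ℕ) (s : DyckStep) :
    P (X i ⁻¹' {z | z = 1 ↔ s = U}) = 1 / 2 := by
  have hU : X i ⁻¹' {z | z = 1 ↔ U = U} = {ω | X i ω = 1} := by ext; simp
  have hD : X i ⁻¹' {z | z = 1 ↔ D = U} = {ω | X i ω = 1}ᶜ := by ext; simp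
  cases s
  · rw [hU, h1]
  · rw [hD, prob_compl_eq_one_sub (s := {ω | X i ω = 1}) (hX i (measurableSet_singleton 1)),
      h1, one_div, ENNReal.one_sub_inv_two]

lemma measure_stepList_eq (hX : ∀ i, Measurable (X i)) (hindep : iIndepFun X P)
    (h1 : ∀ i, P {ω | X i ω = 1} = 1 / 2) {n : ℕ} {l : List DyckStep} (hl : l.length = n) :
    P {ω | stepList (X · ω) n = l} = (1 / 2) ^ n := by
  rw [setOf_stepList_eq hl, hindep.measure_inter_preimage_eq_mul _ fun i _ => .of_discrete]
  simp only [measure_preimage_eq_one_iff_eq_half hX h1, prod_const, card_range]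

lemma ae_eq_one_or_eq_neg_one (hX : ∀ i, Measurable (X i))
    (h1 : ∀ i, P {ω | X i ω = 1} = 1 / 2) (h2 : ∀ i, P {ω | X i ω = -1} = 1 / 2) :
    ∀ᵐ ω ∂P, ∀ i, X i ω = 1 ∨ X i ω = -1 := by
  refine ae_all_iff.mpr fun i => ?_
  have hdisj : Disjoint {ω | X i ω = 1} {ω | X i ω = -1} :=
    Set.disjoint_left.mpr fun ω h h' => by simp_all
  refine (ae_iff_measure_eq ?_).mpr ?_
  · exact ((hX i (measurableSet_singleton 1)).union
      (hX i (measurableSet_singleton (-1)))).nullMeasurableSet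
  · rw [measure_univ, Set.ofPred_or, measure_union hdisj (hX i (measurableSet_singleton (-1))),
      h1, h2, ENNReal.add_halves]

theorem measure_nonneg_and_return_eq_catalan_mul (hX : ∀ i, Measurable (X i))
    (hindep : iIndepFun X P)
    (h1 : ∀ i, P {ω | X i ω = 1} = 1 / 2) (h2 : ∀ i, P {ω | X i ω = -1} = 1 / 2) (m : ℕ) :
    P {ω | (∀ j ≤ 2 * m, 0 ≤ ∑ i ∈ range j, X i ω) ∧ ∑ i ∈ range (2 * m), X i ω = 0}
      = catalan m * (1 / 2) ^ (2 * m) := by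
  have hae : {ω | (∀ j ≤ 2 * m, 0 ≤ ∑ i ∈ range j, X i ω) ∧ ∑ i ∈ range (2 * m), X i ω = 0}
      =ᵐ[P] (fun ω => stepList (X · ω) (2 * m)) ⁻¹' dyckLists m := by
    filter_upwards [ae_eq_one_or_eq_neg_one hX h1 h2] with ω hω
    refine propext ?_
    change _ ↔ stepList (X · ω) (2 * m) ∈ (dyckLists m : Set (List DyckStep))
    rw [mem_coe, mem_dyckLists, exists_dyckWord_toList_eq_stepList_iff fun i _ => hω i]
    exact (and_iff_right (length_stepList _ _)).symm
  calc P {ω | (∀ j ≤ 2 * m, 0 ≤ ∑ i ∈ range j, X i ω) ∧ ∑ i ∈ range (2 * m), X i ω = 0}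
      = ∑ l ∈ dyckLists m, P {ω | stepList (X · ω) (2 * m) = l} := by
        rw [measure_congr hae, ← sum_measure_preimage_singleton _ fun l hl =>
          measurableSet_stepList_eq hX (mem_dyckLists.mp hl).1]
        rfl
    _ = ∑ l ∈ dyckLists m, (1 / 2) ^ (2 * m) :=
        sum_congr rfl fun l hl => measure_stepList_eq hX hindep h1 (mem_dyckLists.mp hl).1
    _ = catalan m * (1 / 2) ^ (2 * m) := by rw [sum_const, card_dyckLists, nsmul_eq_mul]

end Probability

end SimpleRandomWalk

open SimpleRandomWalk in
theorem stmt3_general {Ω : Type*} [MeasurableSpace Ω] (P : Measure Ω) [IsProbabilityMeasure P]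
    (X : ℕ → Ω → ℤ) (hX : ∀ i, Measurable (X i))
    (hindep : iIndepFun X P)
    (h1 : ∀ i, P {ω | X i ω = 1} = 1/2)
    (h2 : ∀ i, P {ω | X i ω = -1} = 1/2)
    (S : ℕ → Ω → ℤ) (hS : ∀ n ω, S n ω = ∑ i ∈ Finset.range n, X i ω)
    (n : ℕ) (hev : Even n) :
    (P {ω | (∀ j ≤ n, 0 ≤ S j ω) ∧ S n ω = 0}).toReal
      = (n.choose (n / 2) : ℝ) / 2 ^ n - (n.choose ((n + 2) / 2) : ℝ) / 2 ^ n ∧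
    (P {ω | (∀ j ≤ n, 0 ≤ S j ω) ∧ S n ω = 0}).toReal
      = 2 * (Nat.doubleFactorial (n - 1) : ℝ) / (Nat.doubleFactorial (n + 2) : ℝ) := by
  obtain ⟨m, rfl⟩ := even_iff_two_dvd.mp hev
  have hprob : (P {ω | (∀ j ≤ 2 * m, 0 ≤ S j ω) ∧ S (2 * m) ω = 0}).toReal
      = catalan m * (1 / 2) ^ (2 * m) := by
    simp only [hS, measure_nonneg_and_return_eq_catalan_mul hX hindep h1 h2 m]
    simp
  rw [hprob, show 2 * m / 2 = m by omega, show (2 * m + 2) / 2 = m + 1 by omega]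
  refine ⟨?_, catalan_mul_half_pow_eq_doubleFactorial m⟩
  rw [cast_catalan_eq_choose_sub_choose, one_div_pow]
  ring

theorem stmt3 {Ω : Type*} [MeasurableSpace Ω] (P : Measure Ω) [IsProbabilityMeasure P]
    (X : ℕ → Ω → ℤ) (hX : ∀ i, Measurable (X i))
    (hindep : iIndepFun X P)
    (h1 : ∀ i, P {ω | X i ω = 1} = 1/2)
    (h2 : ∀ i, P {ω | X i ω = -1} = 1/2)
    (S : ℕ → Ω → ℤ) (hS : ∀ n ω, S n ω = ∑ i ∈ Finset.range n, X i ω)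
    (n : ℕ) (hn : 2 ≤ n) (hev : Even n) :
    (P {ω | (∀ j ≤ n, 0 ≤ S j ω) ∧ S n ω = 0}).toReal
      = (n.choose (n / 2) : ℝ) / 2 ^ n - (n.choose ((n + 2) / 2) : ℝ) / 2 ^ n ∧
    (P {ω | (∀ j ≤ n, 0 ≤ S j ω) ∧ S n ω = 0}).toReal
      = 2 * (Nat.doubleFactorial (n - 1) : ℝ) / (Nat.doubleFactorial (n + 2) : ℝ) :=
  stmt3_general P X hX hindep h1 h2 S hS n hev
end

section
/- For a simple symmetric random walk on ℤ started at 0, P(S_l ≤ S_t for all 0 ≤ l ≤ t) = C(2m, m)/2^{2m}, where m = t/2 if t is even and m = (t+1)/2 if t is odd. -/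
/-!
The event depends only on the first `t` steps, which are uniformly distributed on `{1, -1}ᵗ`, so
its probability is `2⁻ᵗ` times the number of sign tuples whose partial sums never exceed their
total. Prepending a step `a` to a tuple `x` with this property preserves it iff `0 ≤ a + ∑ x`.
Hence the number `N n k` of such tuples of length `n` with at least `k` up-steps satisfies a
Pascal-type recursion, solved by `N n k = C(n, max k ⌈n/2⌉)`. For `k = 0` this gives
`C(t, ⌈t/2⌉) / 2ᵗ`, which equals `C(2m, m) / 2^(2m)` because `C(2m, m) = 2 C(2m - 1, m)`.
-/

open Finset MeasureTheory ProbabilityTheory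
open scoped ENNReal

theorem Finset.sum_range_eq_sum_filter_val_lt {M : Type*} [AddCommMonoid M] (f : ℕ → M)
    {l n : ℕ} (hl : l ≤ n) : ∑ i ∈ range l, f i = ∑ i : Fin n with i.val < l, f i := by
  rw [sum_filter, Fin.sum_univ_eq_sum_range (fun i => if i < l then f i else 0), ← sum_filter]
  congr 1
  ext i
  simp only [mem_range, mem_filter]
  omega

theorem Finset.card_filter_piFinset_const_succ {α : Type*} (s : Finset α) (n : ℕ)
    (p : (Fin (n + 1) → α) → Prop) [DecidablePred p] :
    #{x ∈ Fintype.piFinset fun _ => s | p x} =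
      ∑ a ∈ s, #{x ∈ Fintype.piFinset fun _ : Fin n => s | p (Fin.cons a x)} := by
  have hcons : Fintype.piFinset (fun _ : Fin (n + 1) => s) =
      (s ×ˢ Fintype.piFinset fun _ : Fin n => s).map (Fin.consEquiv fun _ => α).toEmbedding := by
    ext x
    simp [mem_map_equiv, Fin.mem_piFinset_iff_zero_tail (f := x), Fin.tail]
  simp only [card_filter, hcons, sum_map, sum_product]
  rfl

theorem MeasureTheory.measure_preimage_eq_card_mul {Ω β : Type*} [MeasurableSpace Ω]
    [MeasurableSpace β] [Countable β] [MeasurableSingletonClass β] [DecidableEq β]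
    (P : Measure Ω) {Y : Ω → β} (hY : Measurable Y) {F : Finset β} {c : ℝ≥0∞}
    (hc : ∀ x, P (Y ⁻¹' {x}) = if x ∈ F then c else 0) (G : Set β) [DecidablePred (· ∈ G)] :
    P (Y ⁻¹' G) = #{x ∈ F | x ∈ G} * c := by
  rw [← tsum_measure_preimage_singleton G.to_countable fun y _ => hY (measurableSet_singleton y),
    _root_.tsum_subtype G fun x => P (Y ⁻¹' {x}), tsum_eq_sum (s := F)]
  · simp [Set.indicator_apply, hc, sum_ite, inter_eq_left.2 (filter_subset _ F)]
  · intro b hb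
    simp [Set.indicator_apply, hc, hb]

def EndsAtMax {α : Type*} [AddCommMonoid α] [LE α] {n : ℕ} (x : Fin n → α) : Prop :=
  ∀ l ≤ n, ∑ i : Fin n with i.val < l, x i ≤ ∑ i, x i

instance {α : Type*} [AddCommMonoid α] [LE α] [DecidableLE α] {n : ℕ} (x : Fin n → α) :
    Decidable (EndsAtMax x) :=
  inferInstanceAs (Decidable (∀ l ≤ n, _))

theorem EndsAtMax.sum_nonneg {α : Type*} [AddCommMonoid α] [LE α] {n : ℕ} {x : Fin n → α}
    (hx : EndsAtMax x) : 0 ≤ ∑ i, x i := by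
  simpa using hx 0 (Nat.zero_le n)

theorem Fin.sum_filter_val_lt_succ_cons {α : Type*} [AddCommMonoid α] {n : ℕ} (a : α)
    (x : Fin n → α) (l : ℕ) :
    ∑ i : Fin (n + 1) with i.val < l + 1, Fin.cons a x i = a + ∑ i : Fin n with i.val < l, x i := by
  simp [sum_filter, Fin.sum_univ_succ]

theorem endsAtMax_cons_iff {α : Type*} [AddCommGroup α] [PartialOrder α] [IsOrderedAddMonoid α]
    {n : ℕ} (a : α) (x : Fin n → α) :
    EndsAtMax (Fin.cons a x : Fin (n + 1) → α) ↔ 0 ≤ a + ∑ i, x i ∧ EndsAtMax x := by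
  have step (l : ℕ) : ∑ i : Fin (n + 1) with i.val < l + 1, Fin.cons a x i ≤ ∑ i, Fin.cons a x i ↔
      ∑ i : Fin n with i.val < l, x i ≤ ∑ i, x i := by
    rw [Fin.sum_filter_val_lt_succ_cons, Fin.sum_cons, add_le_add_iff_left]
  constructor
  · intro h
    exact ⟨by simpa using h 0 (Nat.zero_le _), fun l hl => (step l).1 (h (l + 1) (by omega))⟩
  · rintro ⟨h0, h⟩ (_ | l) hl
    · simpa using h0
    · exact (step l).2 (h l (by omega))

def signTuples (n : ℕ) : Finset (Fin n → ℤ) := Fintype.piFinset fun _ => {1, -1}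

theorem even_natCast_add_sum_of_mem_signTuples {n : ℕ} {x : Fin n → ℤ} (hx : x ∈ signTuples n) :
    Even ((n : ℤ) + ∑ i, x i) := by
  have h : (n : ℤ) + ∑ i, x i = ∑ i, (1 + x i) := by simp [sum_add_distrib]
  rw [h]
  refine even_sum _ fun i _ => ?_
  rcases mem_insert.1 (Fintype.mem_piFinset.1 hx i) with h | h <;> simp_all

/-- `2 * k ≤ n + ∑ i, x i` says that at least `k` entries of `x` are equal to `1`. -/
def numEndsAtMax (n k : ℕ) : ℕ :=
  #{x ∈ signTuples n | EndsAtMax x ∧ 2 * (k : ℤ) ≤ n + ∑ i, x i}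

theorem numEndsAtMax_succ (n k : ℕ) :
    numEndsAtMax (n + 1) k = numEndsAtMax n (k - 1) + numEndsAtMax n (max k (n / 2 + 1)) := by
  rw [numEndsAtMax, numEndsAtMax, numEndsAtMax, signTuples, card_filter_piFinset_const_succ,
    sum_pair (by decide)]
  -- Prepending `-1` needs `1 ≤ ∑ i, x i`; by parity this is a bound on the number of up-steps.
  congr 1 <;> refine congrArg card (filter_congr fun x hx => ?_) <;>
    simp only [endsAtMax_cons_iff, Fin.sum_cons] <;>
    obtain ⟨r, hr⟩ := even_natCast_add_sum_of_mem_signTuples hx <;>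
    exact ⟨fun ⟨⟨_, hx⟩, hk⟩ => ⟨hx, by omega⟩,
      fun ⟨hx, hk⟩ => have := hx.sum_nonneg; ⟨⟨by omega, hx⟩, by omega⟩⟩

theorem choose_succ_max_half (n k : ℕ) :
    (n + 1).choose (max k ((n + 2) / 2)) =
      n.choose (max (k - 1) ((n + 1) / 2)) + n.choose (max (max k (n / 2 + 1)) ((n + 1) / 2)) := by
  obtain ⟨a, rfl | rfl⟩ := Nat.even_or_odd' n
  · rw [show max k ((2 * a + 2) / 2) = max (k - 1) ((2 * a + 1) / 2) + 1 by omega,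
      show max (max k (2 * a / 2 + 1)) ((2 * a + 1) / 2) = max (k - 1) ((2 * a + 1) / 2) + 1 by
        omega,
      Nat.choose_succ_succ']
  rcases le_or_gt k (a + 1) with hk | hk
  · rw [show max k ((2 * a + 1 + 2) / 2) = a + 1 by omega,
      show max (k - 1) ((2 * a + 1 + 1) / 2) = a + 1 by omega,
      show max (max k ((2 * a + 1) / 2 + 1)) ((2 * a + 1 + 1) / 2) = a + 1 by omega,
      Nat.choose_succ_succ', Nat.choose_symm_half]
  · rw [show max k ((2 * a + 1 + 2) / 2) = k - 1 + 1 by omega,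
      show max (k - 1) ((2 * a + 1 + 1) / 2) = k - 1 by omega,
      show max (max k ((2 * a + 1) / 2 + 1)) ((2 * a + 1 + 1) / 2) = k - 1 + 1 by omega,
      Nat.choose_succ_succ']

theorem numEndsAtMax_eq_choose (n k : ℕ) :
    numEndsAtMax n k = n.choose (max k ((n + 1) / 2)) := by
  induction n generalizing k with
  | zero => cases k <;> simp [numEndsAtMax, signTuples, EndsAtMax]
  | succ n ih => rw [numEndsAtMax_succ, ih, ih, choose_succ_max_half]

theorem card_filter_endsAtMax_signTuples (n : ℕ) :
    #{x ∈ signTuples n | EndsAtMax x} = n.choose ((n + 1) / 2) := by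
  rw [← max_eq_right (Nat.zero_le ((n + 1) / 2)), ← numEndsAtMax_eq_choose, numEndsAtMax]
  refine congrArg card (filter_congr fun x _ => ?_)
  exact ⟨fun hx => ⟨hx, by have := hx.sum_nonneg; omega⟩, And.left⟩

theorem measure_eq_of_rademacher {Ω : Type*} [MeasurableSpace Ω] {P : Measure Ω}
    [IsProbabilityMeasure P] {Z : Ω → ℤ} (hZ : Measurable Z) (h1 : P {ω | Z ω = 1} = 1 / 2)
    (h2 : P {ω | Z ω = -1} = 1 / 2) (a : ℤ) :
    P {ω | Z ω = a} = if a ∈ ({1, -1} : Finset ℤ) then 2⁻¹ else 0 := by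
  split_ifs with ha
  · rcases mem_insert.1 ha with rfl | ha
    · rw [h1, one_div]
    · rw [mem_singleton.1 ha, h2, one_div]
  have hm (b : ℤ) : MeasurableSet {ω | Z ω = b} := hZ (measurableSet_singleton b)
  have hnull : P ({ω | Z ω = 1} ∪ {ω | Z ω = -1})ᶜ = 0 := by
    rw [prob_compl_eq_one_sub ((hm 1).union (hm (-1))), measure_union _ (hm (-1)), h1, h2,
      ENNReal.add_halves, tsub_self]
    exact Set.disjoint_left.2 fun ω (h : Z ω = 1) (h' : Z ω = -1) => by omega
  refine measure_mono_null (fun ω (hω : Z ω = a) => ?_) hnull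
  simp_all

theorem measure_preimage_tuple_eq {Ω : Type*} [MeasurableSpace Ω] {P : Measure Ω}
    [IsProbabilityMeasure P] {X : ℕ → Ω → ℤ} (hX : ∀ i, Measurable (X i))
    (hindep : iIndepFun X P) (h1 : ∀ i, P {ω | X i ω = 1} = 1 / 2)
    (h2 : ∀ i, P {ω | X i ω = -1} = 1 / 2) (t : ℕ) (x : Fin t → ℤ) :
    P ((fun ω (i : Fin t) => X i ω) ⁻¹' {x}) = if x ∈ signTuples t then 2⁻¹ ^ t else 0 := by
  have hcyl : (fun ω (i : Fin t) => X i ω) ⁻¹' {x} =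
      ⋂ i ∈ (univ : Finset (Fin t)), (fun ω => X i ω) ⁻¹' {x i} := by
    ext
    simp [funext_iff]
  rw [hcyl, (hindep.precomp Fin.val_injective).measure_inter_preimage_eq_mul _
    fun _ _ => measurableSet_singleton _]
  simp only [Set.preimage, Set.mem_singleton_iff, measure_eq_of_rademacher (hX _) (h1 _) (h2 _),
    Fintype.prod_ite_zero, prod_const, card_univ, Fintype.card_fin, signTuples,
    Fintype.mem_piFinset]

theorem choose_half_div_two_pow (t : ℕ) :
    (t.choose ((t + 1) / 2) : ℝ) / 2 ^ t =
      ((2 * ((t + 1) / 2)).choose ((t + 1) / 2) : ℝ) / 2 ^ (2 * ((t + 1) / 2)) := by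
  obtain ⟨a, rfl | rfl⟩ := Nat.even_or_odd' t
  · rw [show (2 * a + 1) / 2 = a by omega]
  have h : (2 * (a + 1)).choose (a + 1) = 2 * (2 * a + 1).choose (a + 1) := by
    rw [show 2 * (a + 1) = 2 * a + 1 + 1 by ring, Nat.choose_succ_succ', Nat.choose_symm_half]
    ring
  rw [show (2 * a + 1 + 1) / 2 = a + 1 by omega, h, show 2 * (a + 1) = 2 * a + 1 + 1 by ring,
    pow_succ]
  push_cast
  field_simp
  ring

theorem stmt12 {Ω : Type*} [MeasurableSpace Ω] (P : Measure Ω) [IsProbabilityMeasure P]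
    (X : ℕ → Ω → ℤ) (hX : ∀ i, Measurable (X i))
    (hindep : iIndepFun X P)
    (h1 : ∀ i, P {ω | X i ω = 1} = 1/2)
    (h2 : ∀ i, P {ω | X i ω = -1} = 1/2)
    (S : ℕ → Ω → ℤ) (hS : ∀ n ω, S n ω = ∑ i ∈ Finset.range n, X i ω)
    (t m : ℕ) (hmeven : Even t → m = t / 2) (hmodd : Odd t → m = (t + 1) / 2) :
    (P {ω | ∀ l ≤ t, S l ω ≤ S t ω}).toReal
      = ((2 * m).choose m : ℝ) / 2 ^ (2 * m) := by
  have hm : m = (t + 1) / 2 := by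
    rcases Nat.even_or_odd t with ht | ht
    · have := Nat.even_iff.1 ht
      rw [hmeven ht]
      omega
    · exact hmodd ht
  have hE : {ω | ∀ l ≤ t, S l ω ≤ S t ω} =
      (fun ω (i : Fin t) => X i ω) ⁻¹' {x | EndsAtMax x} := by
    ext ω
    simp only [Set.mem_ofPred_eq, Set.mem_preimage, EndsAtMax, hS]
    refine forall₂_congr fun l hl => ?_
    rw [sum_range_eq_sum_filter_val_lt _ hl, ← Fin.sum_univ_eq_sum_range (X · ω)]
  rw [hE, measure_preimage_eq_card_mul P 
    (measurable_pi_lambda (fun ω (i : Fin t) => X i ω) fun i => hX i)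
    (measure_preimage_tuple_eq hX hindep h1 h2 t)]
  simp only [Set.mem_ofPred_eq, card_filter_endsAtMax_signTuples, ENNReal.toReal_mul,
    ENNReal.toReal_natCast, ENNReal.toReal_pow, ENNReal.toReal_inv, ENNReal.toReal_ofNat, hm]
  rw [inv_pow, ← div_eq_mul_inv]
  exact choose_half_div_two_pow t
end

section
/- Let α⁺(n) and α⁻(n) be the numbers of rarely visited edges (edges traversed exactly once up to time n) lying on the nonnegative and nonpositive half-axes respectively, for a simple symmetric random walk started at 0. Then α⁺(n)·α⁻(n) = 0 for every n, i.e., at any time all rarely visited edges lie on one side of the origin. -/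
open MeasureTheory ProbabilityTheory Filter

/-! Almost surely every step is `±1`, and then the claim holds pathwise: each traversal of the
edge `⟨y, y+1⟩` moves the walk to the other side of it, so an edge traversed an odd number of
times separates `S 0 = 0` from `S n`. A rarely visited edge `⟨z, z+1⟩` with `z ≥ 0` thus forces
`S n > 0`, and one of the form `⟨z-1, z⟩` with `z ≤ 0` forces `S n < 0`. -/

section NearestNeighbourPath

open Finset

def edgeCrossings (s : ℕ → ℤ) (y : ℤ) (n : ℕ) : Finset ℕ :=
  (Icc 1 n).filter fun k => (s (k-1) = y ∧ s k = y+1) ∨ (s (k-1) = y+1 ∧ s k = y)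

variable {s : ℕ → ℤ}

lemma card_edgeCrossings_succ (y : ℤ) (n : ℕ) :
    #(edgeCrossings s y (n+1)) = #(edgeCrossings s y n) +
      if (s n = y ∧ s (n+1) = y+1) ∨ (s n = y+1 ∧ s (n+1) = y) then 1 else 0 := by
  simp only [edgeCrossings, card_filter, sum_Icc_succ_top (Nat.le_add_left 1 n),
    Nat.add_sub_cancel]

lemma card_edgeCrossings_mod_two (hstep : ∀ k, s (k+1) = s k + 1 ∨ s (k+1) = s k - 1)
    (y : ℤ) (n : ℕ) :
    #(edgeCrossings s y n) % 2 = if (y < s 0 ↔ y < s n) then 0 else 1 := by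
  induction n with
  | zero => simp [edgeCrossings]
  | succ n ih =>
    rw [card_edgeCrossings_succ]
    rcases hstep n with h | h <;> split_ifs at ih ⊢ <;> omega

lemma lt_of_card_edgeCrossings_eq_one (hstep : ∀ k, s (k+1) = s k + 1 ∨ s (k+1) = s k - 1)
    {y : ℤ} {n : ℕ} (hy : s 0 ≤ y) (h : #(edgeCrossings s y n) = 1) : y < s n := by
  have := card_edgeCrossings_mod_two hstep y n
  split_ifs at this <;> omega

lemma le_of_card_edgeCrossings_eq_one (hstep : ∀ k, s (k+1) = s k + 1 ∨ s (k+1) = s k - 1)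
    {y : ℤ} {n : ℕ} (hy : y < s 0) (h : #(edgeCrossings s y n) = 1) : s n ≤ y := by
  have := card_edgeCrossings_mod_two hstep y n
  split_ifs at this <;> omega

lemma ncard_rare_nonneg_mul_ncard_rare_nonpos
    (hstep : ∀ k, s (k+1) = s k + 1 ∨ s (k+1) = s k - 1) (h0 : s 0 = 0) (n : ℕ) :
    {z : ℤ | 0 ≤ z ∧ #(edgeCrossings s z n) = 1}.ncard *
      {z : ℤ | z ≤ 0 ∧ #(edgeCrossings s (z-1) n) = 1}.ncard = 0 := by
  rcases Set.eq_empty_or_nonempty {z : ℤ | 0 ≤ z ∧ #(edgeCrossings s z n) = 1}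
    with hempty | ⟨z, hz, hzrare⟩
  · rw [hempty, Set.ncard_empty, zero_mul]
  · have hz' : z < s n := lt_of_card_edgeCrossings_eq_one hstep (h0 ▸ hz) hzrare
    suffices {z : ℤ | z ≤ 0 ∧ #(edgeCrossings s (z-1) n) = 1} = ∅ by
      rw [this, Set.ncard_empty, mul_zero]
    refine Set.eq_empty_of_forall_notMem fun w ⟨hw, hwrare⟩ => ?_
    have := le_of_card_edgeCrossings_eq_one hstep (by omega) hwrare
    omega

end NearestNeighbourPath

lemma ae_eq_one_or_eq_neg_one {Ω : Type*} [MeasurableSpace Ω] {P : Measure Ω}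
    [IsProbabilityMeasure P] {Y : Ω → ℤ} (hY : Measurable Y)
    (h1 : P {ω | Y ω = 1} = 1/2) (h2 : P {ω | Y ω = -1} = 1/2) :
    ∀ᵐ ω ∂P, Y ω = 1 ∨ Y ω = -1 := by
  have hm1 : MeasurableSet {ω | Y ω = 1} := hY (measurableSet_singleton 1)
  have hm2 : MeasurableSet {ω | Y ω = -1} := hY (measurableSet_singleton (-1))
  have hdisj : Disjoint {ω | Y ω = 1} {ω | Y ω = -1} :=
    Set.disjoint_left.2 fun ω (h : Y ω = 1) (h' : Y ω = -1) => by omega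
  rw [ae_iff_measure_eq (p := fun ω => Y ω = 1 ∨ Y ω = -1) (hm1.union hm2).nullMeasurableSet,
    Set.ofPred_or, measure_union hdisj hm2, h1, h2, ENNReal.add_halves, measure_univ]

theorem stmt19_general {Ω : Type*} [MeasurableSpace Ω] (P : Measure Ω) [IsProbabilityMeasure P]
    (X : ℕ → Ω → ℤ) (hX : ∀ i, Measurable (X i))
    (h1 : ∀ i, P {ω | X i ω = 1} = 1/2)
    (h2 : ∀ i, P {ω | X i ω = -1} = 1/2)
    (S : ℕ → Ω → ℤ) (hS : ∀ n ω, S n ω = ∑ i ∈ Finset.range n, X i ω)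
    (L : ℤ → ℕ → Ω → ℕ)
    (hL : ∀ y n ω, L y n ω = ((Finset.Icc 1 n).filter (fun k =>
        (S (k-1) ω = y ∧ S k ω = y+1) ∨ (S (k-1) ω = y+1 ∧ S k ω = y))).card)
    (αp αm : ℕ → Ω → ℕ)
    (hαp : ∀ n ω, αp n ω = Set.ncard {z : ℤ | 0 ≤ z ∧ L z n ω = 1})
    (hαm : ∀ n ω, αm n ω = Set.ncard {z : ℤ | z ≤ 0 ∧ L (z - 1) n ω = 1}) :
    P {ω | ∀ n, αp n ω * αm n ω = 0} = 1 := by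
  have hsteps : ∀ᵐ ω ∂P, ∀ i, X i ω = 1 ∨ X i ω = -1 :=
    ae_all_iff.2 fun i => ae_eq_one_or_eq_neg_one (hX i) (h1 i) (h2 i)
  refine (measure_congr (eventuallyEq_univ.2 ?_)).trans measure_univ
  filter_upwards [hsteps] with ω hω n
  have hstep : ∀ k, S (k+1) ω = S k ω + 1 ∨ S (k+1) ω = S k ω - 1 := fun k => by
    rw [hS, hS, Finset.sum_range_succ]
    rcases hω k with h | h <;> simp [h, sub_eq_add_neg]
  have h0 : S 0 ω = 0 := by simp [hS]
  simp only [hαp, hαm, hL]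
  exact ncard_rare_nonneg_mul_ncard_rare_nonpos (s := fun k => S k ω) hstep h0 n

theorem stmt19 {Ω : Type*} [MeasurableSpace Ω] (P : Measure Ω) [IsProbabilityMeasure P]
    (X : ℕ → Ω → ℤ) (hX : ∀ i, Measurable (X i))
    (hindep : iIndepFun X P)
    (h1 : ∀ i, P {ω | X i ω = 1} = 1/2)
    (h2 : ∀ i, P {ω | X i ω = -1} = 1/2)
    (S : ℕ → Ω → ℤ) (hS : ∀ n ω, S n ω = ∑ i ∈ Finset.range n, X i ω)
    (L : ℤ → ℕ → Ω → ℕ)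
    (hL : ∀ y n ω, L y n ω = ((Finset.Icc 1 n).filter (fun k =>
        (S (k-1) ω = y ∧ S k ω = y+1) ∨ (S (k-1) ω = y+1 ∧ S k ω = y))).card)
    (αp αm : ℕ → Ω → ℕ)
    (hαp : ∀ n ω, αp n ω = Set.ncard {z : ℤ | 0 ≤ z ∧ L z n ω = 1})
    (hαm : ∀ n ω, αm n ω = Set.ncard {z : ℤ | z ≤ 0 ∧ L (z - 1) n ω = 1}) :
    P {ω | ∀ n, αp n ω * αm n ω = 0} = 1 :=
  stmt19_general P X hX h1 h2 S hS L hL αp αm hαp hαm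
end
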